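/- arXiv:1704.05373 — 2 statements merged into one kernel-verified Lean document; each statement's English description precedes it below -/
import Mathlib

section
/- Let a, b, c be positive real numbers satisfying the strict triangle inequalities a < b + c, b < a + c, c < a + b together with a + b + c < 2π. Then (sin(a/2)·sin(b/2)·sin(c/2))² ≥ sin((a+b-c)/2)·sin((a+c-b)/2)·sin((b+c-a)/2)·sin((a+b)/4)·sin((a+c)/4)·sin((b+c)/4). -/
/-!
By the product-to-difference formula `sin (x + y) sin (x - y) = sin² x - sin² y`, the inequality
`sin ((a+b-c)/2) sin ((a+c-b)/2) sin² ((b+c)/4) ≤ sin² (a/2) sin (b/2) sin (c/2)` at the vertex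
opposite `a` reduces to `sin (a/2) ≤ sin (b/2) + sin (c/2)`, the triangle inequality for the chords
of the spherical triangle. Multiplying the three vertex inequalities bounds the square of the
right-hand side of the theorem by the fourth power of its left-hand side.
-/

open Real

theorem sin_add_mul_sin_sub (x y : ℝ) : sin (x + y) * sin (x - y) = sin x ^ 2 - sin y ^ 2 := by
  rw [sin_add, sin_sub]
  linear_combination sin x ^ 2 * cos_sq_add_sin_sq y - sin y ^ 2 * sin_sq_add_cos_sq x

theorem sin_mul_cos_le_sin_mul_cos {s t d : ℝ} (hd : |d| ≤ s) (hst : s ≤ t) (ht : t ≤ π / 2) :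
    sin s * cos s ≤ sin t * cos d := by
  have hs : 0 ≤ s := (abs_nonneg d).trans hd
  have hsin : sin s ≤ sin t := sin_le_sin_of_le_of_le_pi_div_two (by linarith [pi_pos]) ht hst
  have hcos : cos s ≤ cos d := by
    rw [← cos_abs d]
    exact cos_le_cos_of_nonneg_of_le_pi (abs_nonneg d) (by linarith [pi_pos]) hd
  exact mul_le_mul hsin hcos (cos_nonneg_of_mem_Icc ⟨by linarith [pi_pos], by linarith⟩)
    (sin_nonneg_of_nonneg_of_le_pi (by linarith) (by linarith [pi_pos]))

/-- The chord subtending an arc `x` of a great circle has length `2 sin (x / 2)`. -/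
theorem sin_half_le_sin_half_add_sin_half {a b c : ℝ} (h₁ : |b - c| ≤ a) (h₂ : a ≤ b + c)
    (h₃ : b + c ≤ 2 * π) : sin (a / 2) ≤ sin (b / 2) + sin (c / 2) := by
  have hd : |(b - c) / 4| ≤ a / 4 := by
    rw [abs_div, abs_of_pos (by norm_num : (0 : ℝ) < 4)]
    linarith
  calc sin (a / 2) = 2 * (sin (a / 4) * cos (a / 4)) := by
        rw [← mul_assoc, ← sin_two_mul]; ring_nf
    _ ≤ 2 * (sin ((b + c) / 4) * cos ((b - c) / 4)) := by
        gcongr 2 * ?_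
        refine sin_mul_cos_le_sin_mul_cos hd ?_ ?_ <;> linarith
    _ = sin (b / 2) + sin (c / 2) := by
        rw [sin_add_sin]; ring_nf

theorem sin_mul_sin_mul_sin_sq_le {a b c : ℝ} (h₁ : |b - c| ≤ a) (h₂ : a ≤ b + c)
    (h₃ : b + c ≤ 2 * π) :
    sin ((a + b - c) / 2) * sin ((a + c - b) / 2) * sin ((b + c) / 4) ^ 2 ≤
      sin (a / 2) ^ 2 * (sin (b / 2) * sin (c / 2)) := by
  have e₁ : sin ((a + b - c) / 2) * sin ((a + c - b) / 2) =
      sin (a / 2) ^ 2 - sin ((b - c) / 2) ^ 2 := by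
    rw [← sin_add_mul_sin_sub]; congr 2 <;> ring
  have e₂ : sin (b / 2) * sin (c / 2) = sin ((b + c) / 4) ^ 2 - sin ((b - c) / 4) ^ 2 := by
    rw [← sin_add_mul_sin_sub]; congr 2 <;> ring
  have e₃ : (sin (b / 2) + sin (c / 2)) * sin ((b - c) / 4) =
      sin ((b - c) / 2) * sin ((b + c) / 4) := by
    rw [sin_add_sin, show (b - c) / 2 = 2 * ((b - c) / 4) by ring, sin_two_mul]
    ring_nf
  have hsq : sin (a / 2) ^ 2 * sin ((b - c) / 4) ^ 2 ≤
      sin ((b - c) / 2) ^ 2 * sin ((b + c) / 4) ^ 2 :=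
    calc sin (a / 2) ^ 2 * sin ((b - c) / 4) ^ 2
        ≤ (sin (b / 2) + sin (c / 2)) ^ 2 * sin ((b - c) / 4) ^ 2 := by
          gcongr
          · exact sin_nonneg_of_nonneg_of_le_pi (by linarith [abs_nonneg (b - c)]) (by linarith)
          · exact sin_half_le_sin_half_add_sin_half h₁ h₂ h₃
      _ = sin ((b - c) / 2) ^ 2 * sin ((b + c) / 4) ^ 2 := by rw [← mul_pow, e₃, mul_pow]
  rw [e₁, e₂]
  linear_combination hsq

structure SphericalTriangleSides (a b c : ℝ) : Prop where
  a_lt : a < b + c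
  b_lt : b < a + c
  c_lt : c < a + b
  perimeter_lt : a + b + c < 2 * π

namespace SphericalTriangleSides

variable {a b c : ℝ}

theorem swap (h : SphericalTriangleSides a b c) : SphericalTriangleSides b a c :=
  ⟨h.b_lt, h.a_lt, by linarith [h.c_lt], by linarith [h.perimeter_lt]⟩

theorem rotate (h : SphericalTriangleSides a b c) : SphericalTriangleSides b c a :=
  ⟨by linarith [h.b_lt], by linarith [h.c_lt], by linarith [h.a_lt],
    by linarith [h.perimeter_lt]⟩

theorem sin_mul_sin_mul_sin_sq_nonneg (h : SphericalTriangleSides a b c) :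
    0 ≤ sin ((a + b - c) / 2) * sin ((a + c - b) / 2) * sin ((b + c) / 4) ^ 2 := by
  obtain ⟨ha, hb, hc, hp⟩ := h
  have hsin {x : ℝ} (h₀ : 0 ≤ x) (h₁ : x ≤ 2 * π) : 0 ≤ sin (x / 2) :=
    sin_nonneg_of_nonneg_of_le_pi (by linarith) (by linarith)
  exact mul_nonneg
    (mul_nonneg (hsin (by linarith) (by linarith)) (hsin (by linarith) (by linarith))) (sq_nonneg _)

theorem sin_mul_sin_mul_sin_sq_le (h : SphericalTriangleSides a b c) :
    sin ((a + b - c) / 2) * sin ((a + c - b) / 2) * sin ((b + c) / 4) ^ 2 ≤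
      sin (a / 2) ^ 2 * (sin (b / 2) * sin (c / 2)) :=
  _root_.sin_mul_sin_mul_sin_sq_le (abs_sub_le_iff.2 ⟨by linarith [h.b_lt], by linarith [h.c_lt]⟩)
    h.a_lt.le (by linarith [h.b_lt, h.c_lt, h.perimeter_lt])

end SphericalTriangleSides

theorem stmt_12_general (a b c : ℝ)
    (hab : a < b + c) (hbc : b < a + c) (hca : c < a + b)
    (hsum : a + b + c < 2 * Real.pi) :
    (Real.sin (a / 2) * Real.sin (b / 2) * Real.sin (c / 2)) ^ 2 ≥
      Real.sin ((a + b - c) / 2) * Real.sin ((a + c - b) / 2) *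
        Real.sin ((b + c - a) / 2) *
        Real.sin ((a + b) / 4) * Real.sin ((a + c) / 4) * Real.sin ((b + c) / 4) := by
  have h : SphericalTriangleSides a b c := ⟨hab, hbc, hca, hsum⟩
  have K₁ := h.sin_mul_sin_mul_sin_sq_le
  have K₂ := h.swap.sin_mul_sin_mul_sin_sq_le
  have K₃ := h.rotate.rotate.sin_mul_sin_mul_sin_sq_le
  have N₁ := h.sin_mul_sin_mul_sin_sq_nonneg
  have N₂ := h.swap.sin_mul_sin_mul_sin_sq_nonneg
  have N₃ := h.rotate.rotate.sin_mul_sin_mul_sin_sq_nonneg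
  rw [add_comm b a] at K₂ N₂
  rw [add_comm c a, add_comm c b] at K₃ N₃
  have H := mul_le_mul (mul_le_mul K₁ K₂ N₂ (N₁.trans K₁)) K₃ N₃
    (mul_nonneg (N₁.trans K₁) (N₂.trans K₂))
  refine (le_abs_self _).trans (abs_le_of_sq_le_sq ?_ (sq_nonneg _))
  convert H using 1 <;> ring

theorem stmt_12 (a b c : ℝ) (ha : 0 < a) (hb : 0 < b) (hc : 0 < c)
    (hab : a < b + c) (hbc : b < a + c) (hca : c < a + b)
    (hsum : a + b + c < 2 * Real.pi) :
    (Real.sin (a / 2) * Real.sin (b / 2) * Real.sin (c / 2)) ^ 2 ≥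
      Real.sin ((a + b - c) / 2) * Real.sin ((a + c - b) / 2) *
        Real.sin ((b + c - a) / 2) *
        Real.sin ((a + b) / 4) * Real.sin ((a + c) / 4) * Real.sin ((b + c) / 4) :=
  stmt_12_general a b c hab hbc hca hsum
end

section
/- Let a, b, c be positive real numbers satisfying the strict triangle inequalities a < b + c, b < a + c, c < a + b together with a + b + c < 2π, and write sₐ = sin(a/2), s_b = sin(b/2), s_c = sin(c/2) and B = sin((a+b-c)/2)·sin((a+c-b)/2)·sin((b+c-a)/2). Then 2·sₐ·s_b·s_c/B ≥ (sₐ·s_b·s_c + sₐ³ + s_b³ + s_c³)/(2·sₐ·s_b·s_c) ≥ (1/2)(sₐ/s_b + s_b/sₐ + sₐ/s_c + s_c/sₐ + s_b/s_c + s_c/s_b) − 1 ≥ (1/3)(sₐ/s_b + s_b/sₐ + sₐ/s_c + s_c/sₐ + s_b/s_c + s_c/s_b) ≥ 2. -/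
/-!
Put `x = sin (a/2)`, `y = sin (b/2)`, `z = sin (c/2)`. Pairing the factors of `B` by
`sin (u + v) * sin (u - v) = sin u ^ 2 - sin v ^ 2` and using `|sin v - sin w| ≤ |sin (v - w)|`
on `[0, π/2]`, each product of two factors of `B` is bounded by the matching product of two
factors of `E = (x + y - z) * (x + z - y) * (y + z - x)`. Hence `x, y, z` are the sides of a
planar triangle and `B ≤ E`, and `2xyz / E` is the Euler ratio `R / r` of that planar triangle.
The remaining inequalities are planar: the first is a polynomial inequality after the Ravi
substitution, the second is Schur's inequality, the last two are AM-GM.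
-/

open Real Set

namespace Real

theorem sin_add_mul_sin_sub (x y : ℝ) : sin (x + y) * sin (x - y) = sin x ^ 2 - sin y ^ 2 := by
  rw [sin_add, sin_sub]
  linear_combination sin x ^ 2 * sin_sq_add_cos_sq y - sin y ^ 2 * sin_sq_add_cos_sq x

theorem abs_sin_sub_sin_le_abs_sin_sub {v w : ℝ} (hv : v ∈ Icc 0 (π / 2))
    (hw : w ∈ Icc 0 (π / 2)) : |sin v - sin w| ≤ |sin (v - w)| := by
  obtain ⟨hv₀, hv₁⟩ := hv
  obtain ⟨hw₀, hw₁⟩ := hw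
  have hcos : |cos ((v + w) / 2)| ≤ |cos ((v - w) / 2)| := by
    rw [abs_of_nonneg (cos_nonneg_of_mem_Icc ⟨by linarith, by linarith⟩),
      abs_of_nonneg (cos_nonneg_of_mem_Icc ⟨by linarith, by linarith⟩), add_div, sub_div,
      cos_add, cos_sub]
    have : 0 ≤ sin (v / 2) * sin (w / 2) :=
      mul_nonneg (sin_nonneg_of_nonneg_of_le_pi (by linarith) (by linarith))
        (sin_nonneg_of_nonneg_of_le_pi (by linarith) (by linarith))
    linarith
  calc |sin v - sin w| = |2 * sin ((v - w) / 2)| * |cos ((v + w) / 2)| := by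
        rw [sin_sub_sin, abs_mul]
    _ ≤ |2 * sin ((v - w) / 2)| * |cos ((v - w) / 2)| := by gcongr
    _ = |sin (v - w)| := by
        rw [← abs_mul, ← sin_two_mul]
        ring_nf

theorem sin_add_sub_half_mul_sin_add_sub_half_le (a : ℝ) {b c : ℝ} (hb : b ∈ Icc 0 π) (hc : c ∈ Icc 0 π) :
    sin ((a + b - c) / 2) * sin ((a + c - b) / 2) ≤
      (sin (a / 2) + sin (b / 2) - sin (c / 2)) * (sin (a / 2) + sin (c / 2) - sin (b / 2)) := by
  have hsq : (sin (b / 2) - sin (c / 2)) ^ 2 ≤ sin (b / 2 - c / 2) ^ 2 :=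
    sq_le_sq.mpr <| abs_sin_sub_sin_le_abs_sin_sub ⟨by linarith [hb.1], by linarith [hb.2]⟩
      ⟨by linarith [hc.1], by linarith [hc.2]⟩
  calc sin ((a + b - c) / 2) * sin ((a + c - b) / 2)
        = sin (a / 2 + (b / 2 - c / 2)) * sin (a / 2 - (b / 2 - c / 2)) := by ring_nf
    _ = sin (a / 2) ^ 2 - sin (b / 2 - c / 2) ^ 2 := sin_add_mul_sin_sub _ _
    _ ≤ sin (a / 2) ^ 2 - (sin (b / 2) - sin (c / 2)) ^ 2 := by gcongr
    _ = (sin (a / 2) + sin (b / 2) - sin (c / 2)) * (sin (a / 2) + sin (c / 2) - sin (b / 2)) := by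
        ring

end Real

theorem mul_mul_le_mul_mul_of_pairwise_le {p q r u v w : ℝ} (hp : 0 ≤ p) (hq : 0 ≤ q)
    (hr : 0 ≤ r) (hu : 0 ≤ u) (hv : 0 ≤ v) (hw : 0 ≤ w) (hpq : p * q ≤ u * v)
    (hqr : q * r ≤ v * w) (hrp : r * p ≤ w * u) : p * q * r ≤ u * v * w := by
  refine (sq_le_sq₀ (by positivity) (by positivity)).mp ?_
  calc (p * q * r) ^ 2 = (p * q) * (q * r) * (r * p) := by ring
    _ ≤ (u * v) * (v * w) * (w * u) := by gcongr
    _ = (u * v * w) ^ 2 := by ring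

structure IsSphericalTriangle (a b c : ℝ) : Prop where
  pos_a : 0 < a
  pos_b : 0 < b
  pos_c : 0 < c
  lt_b_add_c : a < b + c
  lt_a_add_c : b < a + c
  lt_a_add_b : c < a + b
  add_add_lt : a + b + c < 2 * π

namespace IsSphericalTriangle

variable {a b c : ℝ}

theorem rotate (h : IsSphericalTriangle a b c) : IsSphericalTriangle b c a :=
  ⟨h.pos_b, h.pos_c, h.pos_a, by linarith [h.lt_a_add_c], by linarith [h.lt_a_add_b],
    by linarith [h.lt_b_add_c], by linarith [h.add_add_lt]⟩

theorem swap (h : IsSphericalTriangle a b c) : IsSphericalTriangle a c b :=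
  ⟨h.pos_a, h.pos_c, h.pos_b, by linarith [h.lt_b_add_c], by linarith [h.lt_a_add_b],
    h.lt_a_add_c, by linarith [h.add_add_lt]⟩

theorem lt_pi (h : IsSphericalTriangle a b c) : a < π := by
  linarith [h.lt_b_add_c, h.add_add_lt]

theorem sin_half_pos (h : IsSphericalTriangle a b c) : 0 < sin (a / 2) :=
  sin_pos_of_pos_of_lt_pi (by linarith [h.pos_a]) (by linarith [h.pos_a, h.lt_pi])

theorem sin_add_sub_half_pos (h : IsSphericalTriangle a b c) : 0 < sin ((a + b - c) / 2) :=
  sin_pos_of_pos_of_lt_pi (by linarith [h.lt_a_add_b]) (by linarith [h.pos_c, h.add_add_lt])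

theorem sin_half_add_sin_half_sub_sin_half_pos (h : IsSphericalTriangle a b c) :
    0 < sin (a / 2) + sin (b / 2) - sin (c / 2) := by
  have hprod : 0 < (sin (a / 2) + sin (b / 2) - sin (c / 2)) *
      (sin (a / 2) + sin (c / 2) - sin (b / 2)) :=
    calc 0 < sin ((a + b - c) / 2) * sin ((a + c - b) / 2) :=
          mul_pos h.sin_add_sub_half_pos h.swap.sin_add_sub_half_pos
      _ ≤ _ := sin_add_sub_half_mul_sin_add_sub_half_le a ⟨h.pos_b.le, h.rotate.lt_pi.le⟩
          ⟨h.pos_c.le, h.rotate.rotate.lt_pi.le⟩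
  rcases pos_and_pos_or_neg_and_neg_of_mul_pos hprod with ⟨hpos, -⟩ | ⟨hneg₁, hneg₂⟩
  · exact hpos
  · linarith [h.sin_half_pos]

theorem sin_mul_sin_mul_sin_le (h : IsSphericalTriangle a b c) :
    sin ((a + b - c) / 2) * sin ((a + c - b) / 2) * sin ((b + c - a) / 2) ≤
      (sin (a / 2) + sin (b / 2) - sin (c / 2)) * (sin (a / 2) + sin (c / 2) - sin (b / 2)) *
        (sin (b / 2) + sin (c / 2) - sin (a / 2)) := by
  have ha : a ∈ Icc 0 π := ⟨h.pos_a.le, h.lt_pi.le⟩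
  have hb : b ∈ Icc 0 π := ⟨h.pos_b.le, h.rotate.lt_pi.le⟩
  have hc : c ∈ Icc 0 π := ⟨h.pos_c.le, h.rotate.rotate.lt_pi.le⟩
  have hpair_a := sin_add_sub_half_mul_sin_add_sub_half_le a hb hc
  have hpair_b := sin_add_sub_half_mul_sin_add_sub_half_le b hc ha
  have hpair_c := sin_add_sub_half_mul_sin_add_sub_half_le c ha hb
  rw [add_comm b a] at hpair_b
  rw [add_comm c a, add_comm c b] at hpair_c
  exact mul_mul_le_mul_mul_of_pairwise_le h.sin_add_sub_half_pos.le
    h.swap.sin_add_sub_half_pos.le h.rotate.sin_add_sub_half_pos.le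
    h.sin_half_add_sin_half_sub_sin_half_pos.le
    h.swap.sin_half_add_sin_half_sub_sin_half_pos.le
    h.rotate.sin_half_add_sin_half_sub_sin_half_pos.le
    hpair_a (by linarith) (by linarith)

end IsSphericalTriangle

theorem ravi_cubic_le_of_le_of_le {x y z : ℝ} (hz : 0 ≤ z) (hzx : z ≤ x) (hzy : z ≤ y) :
    ((y + z) * (z + x) * (x + y) + (y + z) ^ 3 + (z + x) ^ 3 + (x + y) ^ 3) * (8 * x * y * z) ≤
      4 * ((y + z) * (z + x) * (x + y)) ^ 2 := by
  obtain ⟨p, hp, rfl⟩ : ∃ p, 0 ≤ p ∧ x = z + p := ⟨x - z, by linarith, by ring⟩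
  obtain ⟨q, hq, rfl⟩ : ∃ q, 0 ≤ q ∧ y = z + q := ⟨y - z, by linarith, by ring⟩
  -- the right side minus the left side is exactly this sum of nonnegative terms
  have hsum : 0 ≤ 4 * p ^ 2 * q ^ 2 * (p + q) ^ 2 + 32 * z * p ^ 2 * q ^ 2 * (p + q) +
      96 * z ^ 2 * p ^ 2 * q ^ 2 + 32 * z ^ 3 * p * q * (p + q) +
      16 * z ^ 4 * ((p - q) ^ 2 + p * q) := by
    positivity
  linarith

theorem ravi_cubic_le {x y z : ℝ} (hx : 0 ≤ x) (hy : 0 ≤ y) (hz : 0 ≤ z) :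
    ((y + z) * (z + x) * (x + y) + (y + z) ^ 3 + (z + x) ^ 3 + (x + y) ^ 3) * (8 * x * y * z) ≤
      4 * ((y + z) * (z + x) * (x + y)) ^ 2 := by
  rcases le_total z x with hzx | hxz <;> rcases le_total z y with hzy | hyz
  · exact ravi_cubic_le_of_le_of_le hz hzx hzy
  · linarith [ravi_cubic_le_of_le_of_le hy (hyz.trans hzx) hyz]
  · linarith [ravi_cubic_le_of_le_of_le hx hxz (hxz.trans hzy)]
  · rcases le_total x y with hxy | hyx
    · linarith [ravi_cubic_le_of_le_of_le hx hxy hxz]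
    · linarith [ravi_cubic_le_of_le_of_le hy hyx hyz]

theorem add_cubes_mul_le_of_triangle {x y z : ℝ} (hz : 0 ≤ x + y - z) (hy : 0 ≤ x + z - y)
    (hx : 0 ≤ y + z - x) :
    (x * y * z + x ^ 3 + y ^ 3 + z ^ 3) * ((x + y - z) * (x + z - y) * (y + z - x)) ≤
      4 * (x * y * z) ^ 2 := by
  obtain ⟨p, q, r, hp, hq, hr, rfl, rfl, rfl⟩ : ∃ p q r : ℝ,
      0 ≤ p ∧ 0 ≤ q ∧ 0 ≤ r ∧ x = q + r ∧ y = r + p ∧ z = p + q :=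
    ⟨(y + z - x) / 2, (x + z - y) / 2, (x + y - z) / 2, by linarith, by linarith, by linarith,
      by ring, by ring, by ring⟩
  linarith [ravi_cubic_le hp hq hr]

theorem add_cubes_div_le_of_le {x y z B : ℝ} (hx : 0 < x) (hy : 0 < y) (hz : 0 < z)
    (hxy : 0 ≤ x + y - z) (hxz : 0 ≤ x + z - y) (hyz : 0 ≤ y + z - x) (hB : 0 < B)
    (hBE : B ≤ (x + y - z) * (x + z - y) * (y + z - x)) :
    (x * y * z + x ^ 3 + y ^ 3 + z ^ 3) / (2 * x * y * z) ≤ 2 * x * y * z / B := by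
  rw [div_le_div_iff₀ (by positivity) hB]
  calc (x * y * z + x ^ 3 + y ^ 3 + z ^ 3) * B
      ≤ (x * y * z + x ^ 3 + y ^ 3 + z ^ 3) * ((x + y - z) * (x + z - y) * (y + z - x)) := by
        gcongr
    _ ≤ 4 * (x * y * z) ^ 2 := add_cubes_mul_le_of_triangle hxy hxz hyz
    _ = 2 * x * y * z * (2 * x * y * z) := by ring

theorem schur_inequality {x y z : ℝ} (hx : 0 ≤ x) (hy : 0 ≤ y) (hz : 0 ≤ z) :
    x ^ 2 * y + x ^ 2 * z + y ^ 2 * x + y ^ 2 * z + z ^ 2 * x + z ^ 2 * y ≤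
      x ^ 3 + y ^ 3 + z ^ 3 + 3 * (x * y * z) := by
  rcases le_total x y with h₁ | h₁ <;> rcases le_total y z with h₂ | h₂ <;>
    rcases le_total x z with h₃ | h₃ <;>
    nlinarith [mul_nonneg (mul_nonneg hx hy) hz, mul_nonneg hx (mul_self_nonneg (y - z)),
      mul_nonneg hy (mul_self_nonneg (x - z)), mul_nonneg hz (mul_self_nonneg (x - y)),
      mul_nonneg (sub_nonneg.2 h₁) (sub_nonneg.2 h₂), mul_nonneg (sub_nonneg.2 h₂) (sub_nonneg.2 h₃),
      mul_nonneg (sub_nonneg.2 h₁) (sub_nonneg.2 h₃)]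

theorem half_sum_div_add_div_sub_one_le {x y z : ℝ} (hx : 0 < x) (hy : 0 < y) (hz : 0 < z) :
    1 / 2 * (x / y + y / x + x / z + z / x + y / z + z / y) - 1 ≤
      (x * y * z + x ^ 3 + y ^ 3 + z ^ 3) / (2 * x * y * z) := by
  rw [← sub_nonneg]
  have expand : (x * y * z + x ^ 3 + y ^ 3 + z ^ 3) / (2 * x * y * z) -
      (1 / 2 * (x / y + y / x + x / z + z / x + y / z + z / y) - 1) =
      (x ^ 3 + y ^ 3 + z ^ 3 + 3 * (x * y * z) -
        (x ^ 2 * y + x ^ 2 * z + y ^ 2 * x + y ^ 2 * z + z ^ 2 * x + z ^ 2 * y)) /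
        (2 * x * y * z) := by
    field_simp
    ring
  rw [expand]
  exact div_nonneg (sub_nonneg.2 (schur_inequality hx.le hy.le hz.le)) (by positivity)

theorem two_le_div_add_div {x y : ℝ} (hx : 0 < x) (hy : 0 < y) : 2 ≤ x / y + y / x := by
  rw [div_add_div _ _ hy.ne' hx.ne', le_div_iff₀ (by positivity)]
  nlinarith [sq_nonneg (x - y)]

theorem six_le_sum_div_add_div {x y z : ℝ} (hx : 0 < x) (hy : 0 < y) (hz : 0 < z) :
    6 ≤ x / y + y / x + x / z + z / x + y / z + z / y := by
  linarith [two_le_div_add_div hx hy, two_le_div_add_div hx hz, two_le_div_add_div hy hz]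

theorem stmt_17 (a b c : ℝ) (ha : 0 < a) (hb : 0 < b) (hc : 0 < c)
    (hab : a < b + c) (hbc : b < a + c) (hca : c < a + b)
    (hsum : a + b + c < 2 * Real.pi) :
    let sa := Real.sin (a / 2)
    let sb := Real.sin (b / 2)
    let sc := Real.sin (c / 2)
    let B := Real.sin ((a + b - c) / 2) * Real.sin ((a + c - b) / 2) *
      Real.sin ((b + c - a) / 2)
    2 * sa * sb * sc / B ≥ (sa * sb * sc + sa ^ 3 + sb ^ 3 + sc ^ 3) / (2 * sa * sb * sc) ∧
    (sa * sb * sc + sa ^ 3 + sb ^ 3 + sc ^ 3) / (2 * sa * sb * sc) ≥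
      1 / 2 * (sa / sb + sb / sa + sa / sc + sc / sa + sb / sc + sc / sb) - 1 ∧
    1 / 2 * (sa / sb + sb / sa + sa / sc + sc / sa + sb / sc + sc / sb) - 1 ≥
      1 / 3 * (sa / sb + sb / sa + sa / sc + sc / sa + sb / sc + sc / sb) ∧
    1 / 3 * (sa / sb + sb / sa + sa / sc + sc / sa + sb / sc + sc / sb) ≥ 2 := by
  have h : IsSphericalTriangle a b c := ⟨ha, hb, hc, hab, hbc, hca, hsum⟩
  intro sa sb sc B
  have hsa : 0 < sa := h.sin_half_pos
  have hsb : 0 < sb := h.rotate.sin_half_pos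
  have hsc : 0 < sc := h.rotate.rotate.sin_half_pos
  have hB : 0 < B := mul_pos (mul_pos h.sin_add_sub_half_pos h.swap.sin_add_sub_half_pos)
    h.rotate.sin_add_sub_half_pos
  have h6 := six_le_sum_div_add_div hsa hsb hsc
  refine ⟨add_cubes_div_le_of_le hsa hsb hsc h.sin_half_add_sin_half_sub_sin_half_pos.le
    h.swap.sin_half_add_sin_half_sub_sin_half_pos.le
    h.rotate.sin_half_add_sin_half_sub_sin_half_pos.le hB h.sin_mul_sin_mul_sin_le,
    half_sum_div_add_div_sub_one_le hsa hsb hsc, by linarith, by linarith⟩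
end
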